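/- Let (β_k)_{k≥1} be real numbers and (a^{(m)})_{m≥0} a compatible family of 1-forms on the diamond hierarchical graphs, with Dirichlet magnetic operators D_m. If m ≥ 1 and cos 2β_m = 0, then the numbers z₊ = 1 + 1/√2 and z₋ = 1 − 1/√2 are eigenvalues of D_m, each with multiplicity exactly (2/3)(4^{m−1} − 1), and the spectrum of D_m is exactly {1, z₊, z₋} (for m ≥ 2; for m = 1 it is {1}). -/

import Mathlib

open Complex

abbrev DEdge (m : ℕ) : Type := Fin m → Fin 4

def DVtx : ℕ → Type
  | 0 => Bool
  | m + 1 => DVtx m ⊕ (DEdge m × Bool)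

instance DVtx.instFintype : (m : ℕ) → Fintype (DVtx m)
  | 0 => inferInstanceAs (Fintype Bool)
  | m + 1 =>
      letI := DVtx.instFintype m
      inferInstanceAs (Fintype (DVtx m ⊕ (DEdge m × Bool)))

instance DVtx.instDecidableEq : (m : ℕ) → DecidableEq (DVtx m)
  | 0 => inferInstanceAs (DecidableEq Bool)
  | m + 1 =>
      letI := DVtx.instDecidableEq m
      inferInstanceAs (DecidableEq (DVtx m ⊕ (DEdge m × Bool)))

/-- The inclusion of scale-`m` vertices into scale-`m+1` vertices. -/
def oldV {m : ℕ} (x : DVtx m) : DVtx (m + 1) := Sum.inl x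

/-- The new vertices at scale `m+1`: each scale-`m` edge gives two new vertices. -/
def newV {m : ℕ} (p : DEdge m × Bool) : DVtx (m + 1) := Sum.inr p

/-- Endpoints (source, target) of each canonically directed edge. Each edge `w` of `G_m`
with endpoints `x = src w`, `y = tgt w` is replaced in `G_{m+1}` by the 4-cycle
`x–u–y–v–x` with `u = (w,false)`, `v = (w,true)`, its four edges directed
`x→u`, `u→y`, `y→v`, `v→x`. -/
def dEnds : (m : ℕ) → DEdge m → DVtx m × DVtx m
  | 0, _ => (false, true)
  | m + 1, w =>
      let p : DEdge m := fun i => w i.castSucc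
      let x := (dEnds m p).1
      let y := (dEnds m p).2
      if w (Fin.last m) = 0 then (oldV x, newV (p, false))
      else if w (Fin.last m) = 1 then (newV (p, false), oldV y)
      else if w (Fin.last m) = 2 then (oldV y, newV (p, true))
      else (newV (p, true), oldV x)

def dsrc (m : ℕ) (e : DEdge m) : DVtx m := (dEnds m e).1
def dtgt (m : ℕ) (e : DEdge m) : DVtx m := (dEnds m e).2

/-- Degree of a vertex in `G_m`. -/
def ddeg (m : ℕ) (x : DVtx m) : ℕ :=
  (Finset.univ.filter fun e : DEdge m => dsrc m e = x).card +
  (Finset.univ.filter fun e : DEdge m => dtgt m e = x).card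

/-- The magnetic operator `M^a_m` associated to a 1-form `a` (recorded on the canonical
orientations of the edges; the reversed edge carries `-a e`). -/
noncomputable def magOp (m : ℕ) (a : DEdge m → ℝ) (f : DVtx m → ℂ) (x : DVtx m) : ℂ :=
  (ddeg m x : ℂ)⁻¹ *
    ((∑ e : DEdge m, if dsrc m e = x then f x - Complex.exp (Complex.I * a e) * f (dtgt m e) else 0) +
     (∑ e : DEdge m, if dtgt m e = x then f x - Complex.exp (-(Complex.I * a e)) * f (dsrc m e) else 0))

/-- The two original vertices `V_0` viewed inside `V_m`. -/
def base : (m : ℕ) → Bool → DVtx m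
  | 0, b => b
  | m + 1, b => oldV (base m b)

/-- Matrix of the magnetic operator `M^a_m`. -/
noncomputable def magMat (m : ℕ) (a : DEdge m → ℝ) : Matrix (DVtx m) (DVtx m) ℂ :=
  Matrix.of fun x y => magOp m a (fun v => if v = y then 1 else 0) x

/-- The Dirichlet magnetic operator: submatrix indexed by `V_m \ V_0`. -/
noncomputable def dirMat (m : ℕ) (a : DEdge m → ℝ) :
    Matrix {x : DVtx m // ∀ b, x ≠ base m b} {x : DVtx m // ∀ b, x ≠ base m b} ℂ :=
  (magMat m a).submatrix Subtype.val Subtype.val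

/-- Flux of a 1-form around the scale-`(m+1)` cell replacing edge `w` of `G_m`. -/
noncomputable def cellFlux {m : ℕ} (a : DEdge (m + 1) → ℝ) (w : DEdge m) : ℝ :=
  a (Fin.snoc w 0) + a (Fin.snoc w 1) + a (Fin.snoc w 2) + a (Fin.snoc w 3)

/-- The trace of a 1-form on `G_{m+1}` to `G_m`:
`a'(e_{xy}) = (1/2)(a(e_{xu}) + a(e_{uy}) + a(e_{xv}) + a(e_{vy}))`. -/
noncomputable def traceForm {m : ℕ} (a : DEdge (m + 1) → ℝ) : DEdge m → ℝ :=
  fun w => (1 / 2) * (a (Fin.snoc w 0) + a (Fin.snoc w 1) - a (Fin.snoc w 2) - a (Fin.snoc w 3))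

/-- A compatible family of 1-forms: flux `±4β_m` through every scale-`m` cell, and each
form traces to the previous one. -/
def Compatible (βs : ℕ → ℝ) (a : (m : ℕ) → DEdge m → ℝ) : Prop :=
  ∀ (k : ℕ) (w : DEdge k),
    (cellFlux (a (k + 1)) w = 4 * βs (k + 1) ∨ cellFlux (a (k + 1)) w = -(4 * βs (k + 1))) ∧
    traceForm (a (k + 1)) w = a k w

/-!
At a new vertex `u` of the cell `x–u–y–v–x`, the equation `D f = z f` reads
`(1 - z) f(u) = ½ (e^{-i a(e_xu)} f(x) + e^{i a(e_uy)} f(y))`, so for `z ≠ 1` an eigenfunction is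
determined by its values on the old vertices. Substituting these values into the equation at an
old vertex `x`, the two paths `x–u–y` and `x–v–y` of each cell at `x` carry the phases
`e^{i(a(e_xu) + a(e_uy))}` and `e^{-i(a(e_yv) + a(e_vx))}`, which cancel because the flux `±4β`
satisfies `e^{±4iβ} = -1` when `cos 2β = 0`. The equation at `x` then collapses to
`((1 - z)² - ½) f(x) = 0`. Hence the eigenvalues other than `1` are the roots `1 ± 1/√2` of
`(1 - z)² = ½`, and each of their eigenspaces is parametrised by arbitrary values on the
`|V_{m-1}| - 2 = (2/3)(4^{m-1} - 1)` interior vertices of `G_{m-1}`. The eigenvalue `1` comes from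
a dimension count: a function supported on the `2·4^{m-1}` new vertices satisfies the equation at
every new vertex, and only `|V_{m-1}| - 2` linear conditions at old vertices remain.
-/

section Combinatorics

variable {m : ℕ}

@[simp] lemma oldV_inj {x y : DVtx m} : oldV x = oldV y ↔ x = y := Sum.inl_injective.eq_iff
@[simp] lemma newV_inj {p q : DEdge m × Bool} : newV p = newV q ↔ p = q := Sum.inr_injective.eq_iff
@[simp] lemma oldV_ne_newV (x : DVtx m) (p : DEdge m × Bool) : oldV x ≠ newV p := Sum.inl_ne_inr
@[simp] lemma newV_ne_oldV (x : DVtx m) (p : DEdge m × Bool) : newV p ≠ oldV x := Sum.inr_ne_inl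

@[simp] lemma dsrc_snoc_zero (w : DEdge m) : dsrc (m + 1) (Fin.snoc w 0) = oldV (dsrc m w) := by
  simp [dsrc, dEnds]
@[simp] lemma dtgt_snoc_zero (w : DEdge m) : dtgt (m + 1) (Fin.snoc w 0) = newV (w, false) := by
  simp [dtgt, dEnds]
@[simp] lemma dsrc_snoc_one (w : DEdge m) : dsrc (m + 1) (Fin.snoc w 1) = newV (w, false) := by
  simp [dsrc, dEnds]
@[simp] lemma dtgt_snoc_one (w : DEdge m) : dtgt (m + 1) (Fin.snoc w 1) = oldV (dtgt m w) := by
  simp [dtgt, dEnds]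
@[simp] lemma dsrc_snoc_two (w : DEdge m) : dsrc (m + 1) (Fin.snoc w 2) = oldV (dtgt m w) := by
  simp [dsrc, dtgt, dEnds]
@[simp] lemma dtgt_snoc_two (w : DEdge m) : dtgt (m + 1) (Fin.snoc w 2) = newV (w, true) := by
  simp [dtgt, dEnds]
@[simp] lemma dsrc_snoc_three (w : DEdge m) : dsrc (m + 1) (Fin.snoc w 3) = newV (w, true) := by
  simp [dsrc, dEnds]
@[simp] lemma dtgt_snoc_three (w : DEdge m) : dtgt (m + 1) (Fin.snoc w 3) = oldV (dsrc m w) := by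
  simp [dsrc, dtgt, dEnds]

lemma sum_dEdge_succ {M : Type*} [AddCommMonoid M] (f : DEdge (m + 1) → M) :
    ∑ e, f e = ∑ w : DEdge m,
      (f (Fin.snoc w 0) + f (Fin.snoc w 1) + f (Fin.snoc w 2) + f (Fin.snoc w 3)) := by
  rw [← (Fin.snocEquiv fun _ => Fin 4).sum_comp, Fintype.sum_prod_type_right]
  simp only [Fin.sum_univ_four]
  rfl

lemma ddeg_cast_eq_sum {R : Type*} [Semiring R] (x : DVtx m) :
    (ddeg m x : R) = ∑ e, ((if dsrc m e = x then 1 else 0) + (if dtgt m e = x then 1 else 0)) := by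
  rw [ddeg, Finset.card_filter, Finset.card_filter, Finset.sum_add_distrib]
  push_cast
  rfl

lemma ddeg_newV (p : DEdge m × Bool) : ddeg (m + 1) (newV p) = 2 := by
  obtain ⟨w, b⟩ := p
  rw [← Nat.cast_id (ddeg _ _), ddeg_cast_eq_sum, sum_dEdge_succ]
  cases b <;> simp [Finset.sum_add_distrib]

lemma ddeg_oldV (x : DVtx m) : ddeg (m + 1) (oldV x) = 2 * ddeg m x := by
  rw [← Nat.cast_id (ddeg _ _), ← Nat.cast_id (ddeg m x), ddeg_cast_eq_sum, ddeg_cast_eq_sum,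
    sum_dEdge_succ, Finset.mul_sum]
  refine Finset.sum_congr rfl fun w _ => ?_
  simp only [dsrc_snoc_zero, dtgt_snoc_zero, dsrc_snoc_one, dtgt_snoc_one, dsrc_snoc_two,
    dtgt_snoc_two, dsrc_snoc_three, dtgt_snoc_three, oldV_inj, newV_ne_oldV, if_false]
  split_ifs <;> rfl

lemma ddeg_pos : ∀ {m : ℕ} (x : DVtx m), 0 < ddeg m x
  | 0, x => by revert x; decide
  | _ + 1, Sum.inl x => by
    rw [show Sum.inl x = oldV x from rfl, ddeg_oldV]
    exact Nat.mul_pos two_pos (ddeg_pos x)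
  | _ + 1, Sum.inr p => by rw [show Sum.inr p = newV p from rfl, ddeg_newV]; exact two_pos

end Combinatorics

abbrev Interior (m : ℕ) : Type := {x : DVtx m // ∀ b, x ≠ base m b}

section Interior

variable {m : ℕ}

lemma base_injective : ∀ m, Function.Injective (base m)
  | 0 => fun _ _ h => h
  | m + 1 => fun _ _ h => base_injective m (Sum.inl_injective h)

lemma card_dVtx : ∀ m, 3 * Fintype.card (DVtx m) = 2 * 4 ^ m + 4
  | 0 => rfl
  | m + 1 => by
    have h := card_dVtx m
    change 3 * Fintype.card (DVtx m ⊕ (DEdge m × Bool)) = _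
    simp only [Fintype.card_sum, Fintype.card_prod, Fintype.card_fun, Fintype.card_fin,
      Fintype.card_bool, pow_succ]
    omega

lemma three_mul_card_interior (m : ℕ) : 3 * Fintype.card (Interior m) = 2 * (4 ^ m - 1) := by
  have hcard : Fintype.card (Interior m) = Fintype.card (DVtx m) - 2 := by
    rw [Fintype.card_congr (Equiv.subtypeEquivRight fun x => by simp :
        Interior m ≃ {x // x ∉ Set.range (base m)}), Fintype.card_subtype_compl,
      Set.card_range_of_injective (base_injective m), Fintype.card_bool]
  have := card_dVtx m
  have := Nat.one_le_pow m 4 (by norm_num)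
  omega

lemma card_interior_pos_iff : 0 < Fintype.card (Interior m) ↔ 1 ≤ m := by
  have h := three_mul_card_interior m
  rcases Nat.eq_zero_or_pos m with rfl | hm
  · simp_all
  · have := Nat.one_lt_pow hm.ne' (by norm_num : 1 < 4)
    omega

lemma oldV_mem_interior_iff {x : DVtx m} :
    (∀ b, oldV x ≠ base (m + 1) b) ↔ ∀ b, x ≠ base m b := by
  simp [base]

lemma newV_mem_interior (p : DEdge m × Bool) : ∀ b, newV p ≠ base (m + 1) b := by
  simp [base]

lemma forall_interior_succ {P : Interior (m + 1) → Prop} :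
    (∀ x, P x) ↔ (∀ v : Interior m, P ⟨oldV v, oldV_mem_interior_iff.2 v.2⟩) ∧
      ∀ p, P ⟨newV p, newV_mem_interior p⟩ :=
  ⟨fun h => ⟨fun _ => h _, fun _ => h _⟩, fun ⟨hold, hnew⟩ x =>
    match x with
    | ⟨Sum.inl v, hv⟩ => hold ⟨v, oldV_mem_interior_iff.1 hv⟩
    | ⟨Sum.inr p, _⟩ => hnew p⟩

lemma extend_val_base {M : Type*} [Zero M] (f : Interior m → M) (b : Bool) :
    Function.extend Subtype.val f 0 (base m b) = 0 :=
  Function.extend_apply' _ _ _ fun ⟨x, hx⟩ => x.2 b hx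

lemma extend_val_of_base_eq_zero {M : Type*} [Zero M] {F : DVtx m → M}
    (hF : ∀ b, F (base m b) = 0) :
    Function.extend Subtype.val (fun x : Interior m => F x) 0 = F := by
  ext x
  by_cases hx : ∀ b, x ≠ base m b
  · exact Subtype.val_injective.extend_apply _ _ (⟨x, hx⟩ : Interior m)
  · obtain ⟨b, rfl⟩ := not_forall_not.mp hx
    rw [extend_val_base, hF]

end Interior

noncomputable def magOpₗ (m : ℕ) (a : DEdge m → ℝ) : (DVtx m → ℂ) →ₗ[ℂ] DVtx m → ℂ where
  toFun := magOp m a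
  map_add' f g := by
    ext x
    simp only [magOp, Pi.add_apply, ← mul_add, add_add_add_comm, ← Finset.sum_add_distrib]
    congr 1
    refine Finset.sum_congr rfl fun e _ => ?_
    split_ifs <;> ring
  map_smul' c f := by
    ext x
    simp only [magOp, Pi.smul_apply, smul_eq_mul, RingHom.id_apply, mul_add, Finset.mul_sum]
    congr 1 <;> refine Finset.sum_congr rfl fun e _ => ?_ <;> split_ifs <;> ring

lemma toLin'_dirMat (m : ℕ) (a : DEdge m → ℝ) :
    Matrix.toLin' (dirMat m a) = LinearMap.funLeft ℂ ℂ Subtype.val ∘ₗ magOpₗ m a ∘ₗ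
      Function.ExtendByZero.linearMap ℂ (Subtype.val : Interior m → DVtx m) := by
  rw [← Matrix.toLin'_toMatrix' (_ ∘ₗ _)]
  congr 1
  ext x y
  have hsingle : Function.extend Subtype.val (Pi.single y 1) 0 =
      fun v : DVtx m => if v = y.val then (1 : ℂ) else 0 := by
    rw [← extend_val_of_base_eq_zero (F := fun v : DVtx m => if v = y.val then (1 : ℂ) else 0)
      fun b => if_neg (y.2 b).symm]
    congr 1
    ext z
    simp [Pi.single_apply, Subtype.ext_iff]
  simp only [LinearMap.toMatrix'_apply, dirMat, magMat, Matrix.submatrix_apply, Matrix.of_apply,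
    LinearMap.coe_comp, Function.comp_apply, LinearMap.funLeft_apply]
  exact congrArg (magOp m a · x) hsingle.symm

lemma toLin'_dirMat_sub_apply {m : ℕ} (a : DEdge m → ℝ) (z : ℂ) (f : Interior m → ℂ)
    (x : Interior m) : Matrix.toLin' (dirMat m a - z • 1) f x =
      magOp m a (Function.extend Subtype.val f 0) x - z * f x := by
  rw [map_sub, map_smul, Matrix.toLin'_one, toLin'_dirMat]
  rfl

lemma mem_ker_dirMat_sub_iff {m : ℕ} (a : DEdge m → ℝ) (z : ℂ) (f : Interior m → ℂ) :
    f ∈ LinearMap.ker (Matrix.toLin' (dirMat m a - z • 1)) ↔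
      ∀ x : Interior m, magOp m a (Function.extend Subtype.val f 0) x = z * f x := by
  simp only [LinearMap.mem_ker, funext_iff, toLin'_dirMat_sub_apply, Pi.zero_apply, sub_eq_zero]

lemma hasEigenvalue_toLin'_iff {R n : Type*} [CommRing R] [Fintype n] [DecidableEq n]
    (M : Matrix n n R) (z : R) : Module.End.HasEigenvalue (Matrix.toLin' M) z ↔
      LinearMap.ker (Matrix.toLin' (M - z • 1)) ≠ ⊥ := by
  rw [Module.End.hasEigenvalue_iff, Module.End.eigenspace_def, map_sub, map_smul,
    Matrix.toLin'_one, Module.End.one_eq_id]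

lemma exp_I_mul_eq_neg_one_of_cos_two_mul_eq_zero {β φ : ℝ} (hβ : Real.cos (2 * β) = 0)
    (hφ : φ = 4 * β ∨ φ = -(4 * β)) : exp (I * φ) = -1 := by
  have hcos : Real.cos (4 * β) = -1 := by
    rw [show 4 * β = 2 * (2 * β) by ring, Real.cos_two_mul, hβ]; norm_num
  have hsin : Real.sin (4 * β) = 0 := by
    rw [show 4 * β = 2 * (2 * β) by ring, Real.sin_two_mul, hβ, mul_zero]
  rw [mul_comm, exp_mul_I, ← ofReal_cos, ← ofReal_sin]
  rcases hφ with rfl | rfl <;> simp [hcos, hsin]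

lemma one_sub_inv_div_two_eq_iff {z : ℂ} (hz : 1 - z ≠ 0) :
    1 - (1 - z)⁻¹ / 2 = z ↔ (1 - z) ^ 2 = 2⁻¹ := by
  constructor <;> intro h
  · field_simp at h ⊢; linear_combination h
  · field_simp; linear_combination 2 * h

lemma one_sub_sq_eq_inv_two_iff (z : ℂ) :
    (1 - z) ^ 2 = 2⁻¹ ↔
      z = ((1 + (Real.sqrt 2)⁻¹ : ℝ) : ℂ) ∨ z = ((1 - (Real.sqrt 2)⁻¹ : ℝ) : ℂ) := by
  have hs : ((Real.sqrt 2 : ℝ) : ℂ)⁻¹ ^ 2 = 2⁻¹ := by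
    rw [inv_pow, ← ofReal_pow, Real.sq_sqrt zero_le_two, ofReal_ofNat]
  push_cast
  constructor
  · intro h
    have : (z - (1 + (Real.sqrt 2 : ℂ)⁻¹)) * (z - (1 - (Real.sqrt 2 : ℂ)⁻¹)) = 0 := by
      linear_combination h - hs
    simpa [sub_eq_zero] using this
  · rintro (rfl | rfl) <;> linear_combination hs

section Refinement

variable {k : ℕ} (A : DEdge (k + 1) → ℝ)

noncomputable def oldNeighbourMean (h : DVtx k → ℂ) : DEdge k × Bool → ℂ
  | (w, false) => 2⁻¹ * (exp (-(I * A (Fin.snoc w 0))) * h (dsrc k w) +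
      exp (I * A (Fin.snoc w 1)) * h (dtgt k w))
  | (w, true) => 2⁻¹ * (exp (I * A (Fin.snoc w 3)) * h (dsrc k w) +
      exp (-(I * A (Fin.snoc w 2))) * h (dtgt k w))

noncomputable def newNeighbourSum (G : DEdge k × Bool → ℂ) (x : DVtx k) : ℂ :=
  ∑ w, ((if dsrc k w = x then
      exp (I * A (Fin.snoc w 0)) * G (w, false) + exp (-(I * A (Fin.snoc w 3))) * G (w, true)
      else 0) +
    (if dtgt k w = x then
      exp (I * A (Fin.snoc w 2)) * G (w, true) + exp (-(I * A (Fin.snoc w 1))) * G (w, false)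
      else 0))

lemma magOp_newV (F : DVtx (k + 1) → ℂ) (p : DEdge k × Bool) :
    magOp (k + 1) A F (newV p) = F (newV p) - oldNeighbourMean A (fun x => F (oldV x)) p := by
  obtain ⟨w, b⟩ := p
  rw [magOp, ddeg_newV, sum_dEdge_succ, sum_dEdge_succ]
  cases b <;> simp [oldNeighbourMean] <;> ring

lemma magOp_oldV (F : DVtx (k + 1) → ℂ) (x : DVtx k) :
    magOp (k + 1) A F (oldV x) =
      F (oldV x) - (2 * ddeg k x : ℂ)⁻¹ * newNeighbourSum A (fun p => F (newV p)) x := by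
  have hd : (2 * ddeg k x : ℂ) ≠ 0 := by simpa using (ddeg_pos x).ne'
  rw [magOp, ddeg_oldV, Nat.cast_mul, Nat.cast_two, eq_sub_iff_add_eq, ← mul_add,
    inv_mul_eq_iff_eq_mul₀ hd, ddeg_cast_eq_sum, Finset.mul_sum, Finset.sum_mul, newNeighbourSum,
    ← Finset.sum_add_distrib, sum_dEdge_succ, ← Finset.sum_add_distrib]
  refine Finset.sum_congr rfl fun w _ => ?_
  simp only [dsrc_snoc_zero, dtgt_snoc_zero, dsrc_snoc_one, dtgt_snoc_one, dsrc_snoc_two,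
    dtgt_snoc_two, dsrc_snoc_three, dtgt_snoc_three, oldV_inj, newV_ne_oldV, if_false]
  split_ifs <;> ring

lemma magOp_newV_eq_mul_iff {z : ℂ} (hz : 1 - z ≠ 0) (F : DVtx (k + 1) → ℂ)
    (p : DEdge k × Bool) : magOp (k + 1) A F (newV p) = z * F (newV p) ↔
      F (newV p) = (1 - z)⁻¹ * oldNeighbourMean A (fun x => F (oldV x)) p := by
  rw [magOp_newV, eq_inv_mul_iff_mul_eq₀ hz]
  constructor <;> intro h <;> linear_combination h

lemma oldNeighbourMean_add (h h' : DVtx k → ℂ) (p : DEdge k × Bool) :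
    oldNeighbourMean A (h + h') p = oldNeighbourMean A h p + oldNeighbourMean A h' p := by
  obtain ⟨w, _ | _⟩ := p <;> simp only [oldNeighbourMean, Pi.add_apply] <;> ring

lemma oldNeighbourMean_smul (c : ℂ) (h : DVtx k → ℂ) (p : DEdge k × Bool) :
    oldNeighbourMean A (c • h) p = c * oldNeighbourMean A h p := by
  obtain ⟨w, _ | _⟩ := p <;> simp only [oldNeighbourMean, Pi.smul_apply, smul_eq_mul] <;> ring

lemma oldNeighbourMean_zero (p : DEdge k × Bool) : oldNeighbourMean A 0 p = 0 := by
  simpa using oldNeighbourMean_smul A 0 0 p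

lemma transport_oldNeighbourMean {w : DEdge k} (hw : exp (I * cellFlux A w) = -1)
    (h : DVtx k → ℂ) :
    exp (I * A (Fin.snoc w 0)) * oldNeighbourMean A h (w, false) +
        exp (-(I * A (Fin.snoc w 3))) * oldNeighbourMean A h (w, true) = h (dsrc k w) ∧
      exp (I * A (Fin.snoc w 2)) * oldNeighbourMean A h (w, true) +
        exp (-(I * A (Fin.snoc w 1))) * oldNeighbourMean A h (w, false) = h (dtgt k w) := by
  simp only [cellFlux, ofReal_add, mul_add, exp_add] at hw
  simp only [oldNeighbourMean, exp_neg]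
  constructor <;> field_simp
  · linear_combination h (dtgt k w) * hw
  · linear_combination h (dsrc k w) * hw

variable {A}

lemma newNeighbourSum_mul_oldNeighbourMean (hA : ∀ w, exp (I * cellFlux A w) = -1) (c : ℂ)
    (h : DVtx k → ℂ) (x : DVtx k) :
    newNeighbourSum A (fun p => c * oldNeighbourMean A h p) x = c * ddeg k x * h x := by
  rw [newNeighbourSum, ddeg_cast_eq_sum, Finset.mul_sum, Finset.sum_mul]
  refine Finset.sum_congr rfl fun w _ => ?_
  obtain ⟨hsrc, htgt⟩ := transport_oldNeighbourMean A (hA w) h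
  rw [mul_left_comm _ c, mul_left_comm _ c, ← mul_add, hsrc, mul_left_comm _ c,
    mul_left_comm _ c, ← mul_add, htgt]
  by_cases h1 : dsrc k w = x <;> by_cases h2 : dtgt k w = x <;> simp [h1, h2]
  ring

lemma magOp_oldV_of_newV_eq (hA : ∀ w, exp (I * cellFlux A w) = -1) (c : ℂ)
    {F : DVtx (k + 1) → ℂ}
    (hF : ∀ p, F (newV p) = c * oldNeighbourMean A (fun x => F (oldV x)) p) (x : DVtx k) :
    magOp (k + 1) A F (oldV x) = (1 - c / 2) * F (oldV x) := by
  have hd : (ddeg k x : ℂ) ≠ 0 := by exact_mod_cast (ddeg_pos x).ne'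
  rw [magOp_oldV, funext hF, newNeighbourSum_mul_oldNeighbourMean hA]
  field_simp

variable (A)

noncomputable def cellExtend (c : ℂ) : (DVtx k → ℂ) →ₗ[ℂ] DVtx (k + 1) → ℂ where
  toFun h := Sum.elim h fun p => c * oldNeighbourMean A h p
  map_add' h h' := by
    ext (v | p)
    · rfl
    · show c * oldNeighbourMean A (h + h') p =
        c * oldNeighbourMean A h p + c * oldNeighbourMean A h' p
      rw [oldNeighbourMean_add, mul_add]
  map_smul' r h := by
    ext (v | p)
    · rfl
    · show c * oldNeighbourMean A (r • h) p = r * (c * oldNeighbourMean A h p)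
      rw [oldNeighbourMean_smul, mul_left_comm]

@[simp] lemma cellExtend_oldV (c : ℂ) (h : DVtx k → ℂ) (v : DVtx k) :
    cellExtend A c h (oldV v) = h v := rfl

@[simp] lemma cellExtend_newV (c : ℂ) (h : DVtx k → ℂ) (p : DEdge k × Bool) :
    cellExtend A c h (newV p) = c * oldNeighbourMean A h p := rfl

noncomputable def eigenLift (c : ℂ) : (Interior k → ℂ) →ₗ[ℂ] Interior (k + 1) → ℂ :=
  LinearMap.funLeft ℂ ℂ Subtype.val ∘ₗ cellExtend A c ∘ₗ
    Function.ExtendByZero.linearMap ℂ Subtype.val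

lemma eigenLift_apply (c : ℂ) (g : Interior k → ℂ) (x : Interior (k + 1)) :
    eigenLift A c g x = cellExtend A c (Function.extend Subtype.val g 0) x := rfl

lemma extend_eigenLift (c : ℂ) (g : Interior k → ℂ) :
    Function.extend Subtype.val (eigenLift A c g) 0 =
      cellExtend A c (Function.extend Subtype.val g 0) :=
  extend_val_of_base_eq_zero fun b => extend_val_base g b

lemma eigenLift_injective (c : ℂ) : Function.Injective (eigenLift A c) := fun g g' h => by
  ext v
  simpa [eigenLift_apply, Subtype.val_injective.extend_apply]
    using congrFun h ⟨oldV v, oldV_mem_interior_iff.2 v.2⟩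

end Refinement

section Spectrum

variable {k : ℕ} {A : DEdge (k + 1) → ℝ}

lemma mem_ker_dirMat_sub_iff_eigenLift (hA : ∀ w, exp (I * cellFlux A w) = -1) {z : ℂ}
    (hz : z ≠ 1) (f : Interior (k + 1) → ℂ) :
    f ∈ LinearMap.ker (Matrix.toLin' (dirMat (k + 1) A - z • 1)) ↔
      ∃ g, eigenLift A (1 - z)⁻¹ g = f ∧ ∀ v, (1 - (1 - z)⁻¹ / 2) * g v = z * g v := by
  have hz' : 1 - z ≠ 0 := sub_ne_zero.2 hz.symm
  rw [mem_ker_dirMat_sub_iff, forall_interior_succ]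
  set F := Function.extend Subtype.val f 0
  have hfF : ∀ x, f x = F x := fun x => (Subtype.val_injective.extend_apply f 0 x).symm
  simp only [hfF]
  constructor
  · rintro ⟨hold, hnew⟩
    have hFold : Function.extend Subtype.val (fun v : Interior k => F (oldV v)) 0 =
        fun v => F (oldV v) :=
      extend_val_of_base_eq_zero (F := fun v => F (oldV v)) fun b => extend_val_base f b
    have hFnew := fun p => (magOp_newV_eq_mul_iff A hz' F p).1 (hnew p)
    refine ⟨fun v => F (oldV v), ?_, fun v => ?_⟩
    · ext x
      revert x
      rw [forall_interior_succ]
      refine ⟨fun v => ?_, fun p => ?_⟩ <;> simp only [eigenLift_apply, hfF]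
      · rw [hFold]; rfl
      · rw [hFold, cellExtend_newV, hFnew]
    · rw [← magOp_oldV_of_newV_eq hA _ hFnew, hold v]
  · rintro ⟨g, rfl, hg⟩
    rw [show F = cellExtend A (1 - z)⁻¹ (Function.extend Subtype.val g 0) from
      extend_eigenLift A _ g]
    refine ⟨fun v => ?_, fun p => ?_⟩
    · rw [magOp_oldV_of_newV_eq hA _ fun p => rfl, cellExtend_oldV,
        Subtype.val_injective.extend_apply, hg]
    · exact (magOp_newV_eq_mul_iff A hz' _ p).2 rfl

lemma ker_dirMat_sub_eq_range (hA : ∀ w, exp (I * cellFlux A w) = -1) {z : ℂ}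
    (hz : (1 - z) ^ 2 = 2⁻¹) :
    LinearMap.ker (Matrix.toLin' (dirMat (k + 1) A - z • 1)) =
      LinearMap.range (eigenLift A (1 - z)⁻¹) := by
  have hz1 : 1 - z ≠ 0 := fun h => by norm_num [h] at hz
  ext f
  rw [mem_ker_dirMat_sub_iff_eigenLift hA (fun h => hz1 (by rw [h, sub_self])),
    (one_sub_inv_div_two_eq_iff hz1).2 hz, LinearMap.mem_range]
  simp

lemma ker_dirMat_sub_eq_bot (hA : ∀ w, exp (I * cellFlux A w) = -1) {z : ℂ} (hz1 : z ≠ 1)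
    (hz : (1 - z) ^ 2 ≠ 2⁻¹) : LinearMap.ker (Matrix.toLin' (dirMat (k + 1) A - z • 1)) = ⊥ := by
  have hz' : 1 - z ≠ 0 := sub_ne_zero.2 hz1.symm
  refine eq_bot_iff.2 fun f hf => ?_
  obtain ⟨g, rfl, hg⟩ := (mem_ker_dirMat_sub_iff_eigenLift hA hz1 f).1 hf
  have hne : 1 - (1 - z)⁻¹ / 2 - z ≠ 0 :=
    sub_ne_zero.2 fun h => hz ((one_sub_inv_div_two_eq_iff hz').1 h)
  have hg0 : g = 0 := funext fun v =>
    (mul_eq_zero.1 (by rw [sub_mul, hg v, sub_self])).resolve_left hne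
  rw [hg0, map_zero]
  exact Submodule.zero_mem _

lemma finrank_ker_dirMat_sub (hA : ∀ w, exp (I * cellFlux A w) = -1) {z : ℂ}
    (hz : (1 - z) ^ 2 = 2⁻¹) :
    Module.finrank ℂ (LinearMap.ker (Matrix.toLin' (dirMat (k + 1) A - z • 1))) =
      Fintype.card (Interior k) := by
  rw [ker_dirMat_sub_eq_range hA hz, LinearMap.finrank_range_of_inj (eigenLift_injective A _),
    Module.finrank_fintype_fun_eq_card]

noncomputable def newSupported : (DEdge k × Bool → ℂ) →ₗ[ℂ] Interior (k + 1) → ℂ :=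
  LinearMap.funLeft ℂ ℂ Subtype.val ∘ₗ
    (LinearEquiv.sumArrowLequivProdArrow (DVtx k) (DEdge k × Bool) ℂ ℂ).symm.toLinearMap ∘ₗ
    LinearMap.inr ℂ _ _

lemma newSupported_newV (G : DEdge k × Bool → ℂ) (p : DEdge k × Bool) :
    newSupported G ⟨newV p, newV_mem_interior p⟩ = G p := rfl

variable (A) in
lemma toLin'_dirMat_sub_one_newSupported_newV (G : DEdge k × Bool → ℂ) (p : DEdge k × Bool) :
    Matrix.toLin' (dirMat (k + 1) A - (1 : ℂ) • 1) (newSupported G)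
      ⟨newV p, newV_mem_interior p⟩ = 0 := by
  have hF : Function.extend Subtype.val (newSupported G) 0 =
      (Sum.elim (0 : DVtx k → ℂ) G : DVtx (k + 1) → ℂ) :=
    extend_val_of_base_eq_zero fun b => rfl
  rw [toLin'_dirMat_sub_apply]
  dsimp only
  rw [magOp_newV, hF]
  show G p - oldNeighbourMean A 0 p - 1 * G p = 0
  rw [oldNeighbourMean_zero]
  ring

variable (A) in
lemma ker_dirMat_sub_one_ne_bot :
    LinearMap.ker (Matrix.toLin' (dirMat (k + 1) A - (1 : ℂ) • 1)) ≠ ⊥ := by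
  let P : (DEdge k × Bool → ℂ) →ₗ[ℂ] Interior k → ℂ :=
    LinearMap.funLeft ℂ ℂ (fun v : Interior k => ⟨oldV v, oldV_mem_interior_iff.2 v.2⟩) ∘ₗ
      Matrix.toLin' (dirMat (k + 1) A - (1 : ℂ) • 1) ∘ₗ newSupported
  have hlt : Module.finrank ℂ (Interior k → ℂ) < Module.finrank ℂ (DEdge k × Bool → ℂ) := by
    simp only [Module.finrank_fintype_fun_eq_card, Fintype.card_prod, Fintype.card_fun,
      Fintype.card_fin, Fintype.card_bool]
    have := three_mul_card_interior k
    have := Nat.one_le_pow k 4 (by norm_num)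
    omega
  obtain ⟨G, hG, hG0⟩ :=
    (Submodule.ne_bot_iff _).1 (LinearMap.ker_ne_bot_of_finrank_lt (f := P) hlt)
  refine (Submodule.ne_bot_iff _).2 ⟨newSupported G, ?_, fun h => hG0 ?_⟩
  · rw [LinearMap.mem_ker]
    ext x
    revert x
    rw [forall_interior_succ]
    exact ⟨fun v => congrFun hG v, toLin'_dirMat_sub_one_newSupported_newV A G⟩
  · ext p
    rw [← newSupported_newV G p, h]
    rfl

lemma hasEigenvalue_dirMat_iff (hA : ∀ w, exp (I * cellFlux A w) = -1) (z : ℂ) :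
    Module.End.HasEigenvalue (Matrix.toLin' (dirMat (k + 1) A)) z ↔
      z = 1 ∨ (1 - z) ^ 2 = 2⁻¹ ∧ 1 ≤ k := by
  rw [hasEigenvalue_toLin'_iff]
  by_cases hz1 : z = 1
  · subst hz1
    simpa using ker_dirMat_sub_one_ne_bot A
  by_cases hz : (1 - z) ^ 2 = 2⁻¹
  · rw [ne_eq, ← Submodule.finrank_eq_zero, finrank_ker_dirMat_sub hA hz,
      ← card_interior_pos_iff]
    simp [hz1, hz, Nat.pos_iff_ne_zero]
  · rw [ker_dirMat_sub_eq_bot hA hz1 hz]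
    simp [hz1, hz]

end Spectrum

/-- If `cos 2β_m = 0` (here `m = k+1`), then `z₊ = 1 + 1/√2` and `z₋ = 1 − 1/√2` are
eigenvalues of the Dirichlet magnetic operator `D_m`, each of multiplicity exactly
`(2/3)(4^{m−1} − 1)`, and the spectrum of `D_m` is `{1, z₊, z₋}` for `m ≥ 2` and `{1}`
for `m = 1`. -/
theorem stmt9 (βs : ℕ → ℝ) (a : (m : ℕ) → DEdge m → ℝ) (hcomp : Compatible βs a)
    (k : ℕ) (hβ : Real.cos (2 * βs (k + 1)) = 0) :
    3 * Module.finrank ℂ (LinearMap.ker (Matrix.toLin'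
        (dirMat (k + 1) (a (k + 1)) - ((1 + (Real.sqrt 2)⁻¹ : ℝ) : ℂ) • 1))) =
      2 * (4 ^ k - 1) ∧
    3 * Module.finrank ℂ (LinearMap.ker (Matrix.toLin'
        (dirMat (k + 1) (a (k + 1)) - ((1 - (Real.sqrt 2)⁻¹ : ℝ) : ℂ) • 1))) =
      2 * (4 ^ k - 1) ∧
    (1 ≤ k →
      {z : ℂ | Module.End.HasEigenvalue (Matrix.toLin' (dirMat (k + 1) (a (k + 1)))) z} =
        {(1 : ℂ), ((1 + (Real.sqrt 2)⁻¹ : ℝ) : ℂ), ((1 - (Real.sqrt 2)⁻¹ : ℝ) : ℂ)}) ∧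
    (k = 0 →
      {z : ℂ | Module.End.HasEigenvalue (Matrix.toLin' (dirMat (k + 1) (a (k + 1)))) z} =
        {(1 : ℂ)}) := by
  have hA : ∀ w, exp (I * cellFlux (a (k + 1)) w) = -1 := fun w =>
    exp_I_mul_eq_neg_one_of_cos_two_mul_eq_zero hβ (hcomp k w).1
  refine ⟨?_, ?_, fun hk => ?_, fun hk => ?_⟩
  · rw [finrank_ker_dirMat_sub hA ((one_sub_sq_eq_inv_two_iff _).2 (Or.inl rfl)),
      three_mul_card_interior]
  · rw [finrank_ker_dirMat_sub hA ((one_sub_sq_eq_inv_two_iff _).2 (Or.inr rfl)),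
      three_mul_card_interior]
  · ext z
    simp [hasEigenvalue_dirMat_iff hA, one_sub_sq_eq_inv_two_iff, hk]
  · ext z
    simp [hasEigenvalue_dirMat_iff hA, hk]
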